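/- Let T be a Hom-finite Krull-Schmidt triangulated category with Serre functor ν, M a d-silting object with right adjacent t-structure, and suppose T is ν_d-finite (for each X ∈ T, ν_d^{-n}X lies in T_M^{≤0} for n sufficiently large). Then there exist no simple objects S₁, ..., S_n, S_{n+1} = S₁ in the heart H_M with T(S_i, S_{i+1}[d]) ≠ 0 for all 1 ≤ i ≤ n. In particular no simple S satisfies T(S, S[d]) ≠ 0. -/

import Mathlib

open CategoryTheory Limits Pretriangulated

universe v u

section Preamble

variable (k : Type u) [Field k]
variable (C : Type u) [Category.{v} C] [Preadditive C] [CategoryTheory.Linear k C]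
  [HasZeroObject C] [HasShift C ℤ] [∀ n : ℤ, (CategoryTheory.shiftFunctor C n).Additive]
  [Pretriangulated C] [HasFiniteBiproducts C]

/-- Hom-finiteness over `k`. -/
def HomFinite : Prop := ∀ X Y : C, FiniteDimensional k (X ⟶ Y)

variable {C}

/-- A Krull–Schmidt category: every object is a finite direct sum of objects with
local endomorphism rings. -/
def KrullSchmidt : Prop :=
  ∀ X : C, ∃ (n : ℕ) (Y : Fin n → C),
    Nonempty (X ≅ ⨁ Y) ∧ ∀ i, IsLocalRing (CategoryTheory.End (Y i))

variable {k}

/-- `X` belongs to `add M`: it is a retract of a finite direct sum of copies of `M`. -/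
def inAdd (M X : C) : Prop :=
  ∃ (n : ℕ) (ι : X ⟶ ⨁ (fun _ : Fin n => M)) (ρ : ⨁ (fun _ : Fin n => M) ⟶ X),
    ι ≫ ρ = 𝟙 X

/-- `X` belongs to `add` of a family of objects. -/
def inAddSet (P : Set C) (X : C) : Prop :=
  ∃ (n : ℕ) (Y : Fin n → C) (ι : X ⟶ ⨁ Y) (ρ : ⨁ Y ⟶ X),
    (∀ i, Y i ∈ P) ∧ ι ≫ ρ = 𝟙 X

/-- The smallest thick (triangulated, closed under direct summands) subcategory
containing `M`. -/
inductive inThick (M : C) : C → Prop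
  | base : inThick M M
  | shift (X : C) (n : ℤ) : inThick M X → inThick M (X⟦n⟧)
  | retractOf (X Y : C) : inThick M Y → (∃ (i : X ⟶ Y) (r : Y ⟶ X), i ≫ r = 𝟙 X) →
      inThick M X
  | ext2 (T : Triangle C) : T ∈ distinguishedTriangles →
      inThick M T.obj₁ → inThick M T.obj₃ → inThick M T.obj₂

/-- Silting object: presilting and generating. -/
structure IsSilting (M : C) : Prop where
  presilting : ∀ n : ℤ, 0 < n → ∀ f : M ⟶ M⟦n⟧, f = 0
  generates : ∀ X : C, inThick M X

/-- Tilting object: pretilting and generating. -/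
structure IsTilting (M : C) : Prop where
  pretilting : ∀ n : ℤ, n ≠ 0 → ∀ f : M ⟶ M⟦n⟧, f = 0
  generates : ∀ X : C, inThick M X

/-- The silting partial order `M ≥ N` : `T(M, N[>0]) = 0`. -/
def siltGE (M N : C) : Prop := ∀ n : ℤ, 0 < n → ∀ f : M ⟶ N⟦n⟧, f = 0

variable (k C)

/-- A Serre functor: an autoequivalence `F` together with a bifunctorial perfect
pairing `T(X,Y) ≅ D T(Y, F X)`. -/
structure SerreFunctor where
  F : C ⥤ C
  isEquiv : F.IsEquivalence
  pairing : ∀ X Y : C, (X ⟶ Y) ≃ₗ[k] Module.Dual k (Y ⟶ F.obj X)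
  natural_left : ∀ ⦃X X' Y : C⦄ (f : X' ⟶ X) (g : X ⟶ Y) (h : Y ⟶ F.obj X'),
    pairing X' Y (f ≫ g) h = pairing X Y g (h ≫ F.map f)
  natural_right : ∀ ⦃X Y Y' : C⦄ (g : X ⟶ Y) (e : Y ⟶ Y') (h : Y' ⟶ F.obj X),
    pairing X Y' (g ≫ e) h = pairing X Y g (e ≫ h)

variable {k C}

/-- The quasi-inverse of a Serre functor. -/
noncomputable def SerreFunctor.inv (S : SerreFunctor k C) : C ⥤ C :=
  letI := S.isEquiv
  S.F.inv

/-- `ν_d := ν ∘ [-d]` applied to an object. -/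
def SerreFunctor.nud (S : SerreFunctor k C) (d : ℤ) (X : C) : C :=
  S.F.obj (X⟦(-d)⟧)

/-- `ν_d^{-1} = [d] ∘ ν^{-1}` applied to an object. -/
noncomputable def SerreFunctor.nudInv (S : SerreFunctor k C) (d : ℤ) (X : C) : C :=
  (S.inv.obj X)⟦d⟧

/-- iterated `ν_d^{-1}`. -/
noncomputable def SerreFunctor.nudInvIter (S : SerreFunctor k C) (d : ℤ) (n : ℕ) (X : C) : C :=
  (fun Y => S.nudInv d Y)^[n] X

/-- ℤ-indexed powers of ν_d. -/
noncomputable def SerreFunctor.nudZPow (S : SerreFunctor k C) (d : ℤ) : ℤ → C → C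
  | Int.ofNat n => fun X => (fun Y => S.nud d Y)^[n] X
  | Int.negSucc n => fun X => (fun Y => S.nudInv d Y)^[n + 1] X

/-- coaisle `T_M^{≤0} = M[<0]^⊥`. -/
def TleZ (M X : C) : Prop := ∀ n : ℤ, n < 0 → ∀ f : M⟦n⟧ ⟶ X, f = 0

/-- `T_M^{≥0} = M[>0]^⊥`. -/
def TgeZ (M X : C) : Prop := ∀ n : ℤ, 0 < n → ∀ f : M⟦n⟧ ⟶ X, f = 0

/-- the heart `H_M = T_M^{≤0} ∩ T_M^{≥0}`. -/
def inHeart (M X : C) : Prop := TleZ M X ∧ TgeZ M X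

/-- `(T_M^{≤0}, T_M^{≥0})` is a t-structure: every object admits a truncation
triangle `A → X → B → A[1]` with `A ∈ T_M^{≤0}` and `B ∈ T_M^{≥1}`. -/
def HasRightAdjacentTStructure (M : C) : Prop :=
  ∀ X : C, ∃ (A B : C) (f : A ⟶ X) (g : X ⟶ B) (h : B ⟶ A⟦(1 : ℤ)⟧),
    Triangle.mk f g h ∈ distinguishedTriangles ∧ TleZ M A ∧
    (∀ n : ℤ, 0 ≤ n → ∀ φ : M⟦n⟧ ⟶ B, φ = 0)

/-- membership in `add M * add M[1] * ⋯ * add M[e]`. -/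
def inStarAdd (M : C) : ℕ → C → Prop
  | 0 => fun X => inAdd M X
  | (e + 1) => fun X => ∃ (A B : C) (f : A ⟶ X) (g : X ⟶ B⟦(1 : ℤ)⟧)
      (h : B⟦(1 : ℤ)⟧ ⟶ A⟦(1 : ℤ)⟧),
      Triangle.mk f g h ∈ distinguishedTriangles ∧ inAdd M A ∧ inStarAdd M e B

/-- `M` is `d`-silting: silting and `T(M, ν_d^{-1} M[>0]) = 0`. -/
def IsDSilting (S : SerreFunctor k C) (d : ℤ) (M : C) : Prop :=
  IsSilting M ∧ siltGE M (S.nudInv d M)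

/-- left `(add N)`-approximation. -/
def IsLeftApprox (N : C) {X X₀ : C} (f : X ⟶ X₀) : Prop :=
  inAdd N X₀ ∧ ∀ Z : C, inAdd N Z → ∀ g : X ⟶ Z, ∃ t : X₀ ⟶ Z, f ≫ t = g

/-- minimal left `(add N)`-approximation. -/
def IsMinimalLeftApprox (N : C) {X X₀ : C} (f : X ⟶ X₀) : Prop :=
  IsLeftApprox N f ∧ ∀ g : X₀ ⟶ X₀, f ≫ g = f → IsIso g

/-- right `(add M)`-approximation. -/
def IsRightApprox (M : C) {M₀ N : C} (p : M₀ ⟶ N) : Prop :=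
  inAdd M M₀ ∧ ∀ Z : C, inAdd M Z → ∀ g : Z ⟶ N, ∃ t : Z ⟶ M₀, t ≫ p = g

/-- minimal right `(add M)`-approximation. -/
def IsMinimalRightApprox (M : C) {M₀ N : C} (p : M₀ ⟶ N) : Prop :=
  IsRightApprox M p ∧ ∀ g : M₀ ⟶ M₀, g ≫ p = p → IsIso g

/-- `add M₀ ∩ add X = 0`. -/
def addDisjoint (M₀ X : C) : Prop := ∀ Z : C, inAdd M₀ Z → inAdd X Z → IsZero Z

/-- epimorphism in the heart `H_M` (vanishing of the cokernel): for all `T ∈ H_M`,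
composition with `f` is injective on `Hom(B,T)`. -/
def heartEpi (M : C) {A B : C} (f : A ⟶ B) : Prop :=
  ∀ T : C, inHeart M T → ∀ g : B ⟶ T, f ≫ g = 0 → g = 0

/-- a simple object of the heart `H_M`. -/
def SimpleInHeart (M S : C) : Prop :=
  inHeart M S ∧ ¬ IsZero S ∧ ∀ T : C, inHeart M T → ∀ f : T ⟶ S, f = 0 ∨ heartEpi M f

/-- a semisimple object of the heart. -/
def SemisimpleInHeart (M S : C) : Prop :=
  ∃ (n : ℕ) (Y : Fin n → C), (∀ i, SimpleInHeart M (Y i)) ∧ Nonempty (S ≅ ⨁ Y)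

/-- `H = H⁰(X)`: there is a truncation triangle `W → X → H → W[1]` with
`W ∈ T_M^{≤ -1}` and `H ∈ H_M` (for `X ∈ T_M^{≤0}`), and `q : X ⟶ H` is the
canonical map. -/
def IsH0 (M X H : C) (q : X ⟶ H) : Prop :=
  ∃ (W : C) (f : W ⟶ X) (h : H ⟶ W⟦(1 : ℤ)⟧),
    Triangle.mk f q h ∈ distinguishedTriangles ∧
    (∀ n : ℤ, n ≤ 0 → ∀ φ : M⟦n⟧ ⟶ W, φ = 0) ∧ inHeart M H

/-- `S = top H` in the heart: `S` is a semisimple quotient of `H` through which every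
morphism to a semisimple object factors. -/
def IsTopOf (M H S : C) : Prop :=
  SemisimpleInHeart M S ∧ ∃ q : H ⟶ S, heartEpi M q ∧
    ∀ S' : C, SemisimpleInHeart M S' → ∀ g : H ⟶ S', ∃ t : S ⟶ S', q ≫ t = g

/-- `S = top H⁰(X)`. -/
def IsTopOfH0 (M X S : C) : Prop :=
  ∃ (H : C) (q : X ⟶ H), IsH0 M X H q ∧ IsTopOf M H S

end Preamble
section Statement16Aux

variable {k : Type u} [Field k]
variable {C : Type u} [Category.{v} C] [Preadditive C] [CategoryTheory.Linear k C]
  [HasZeroObject C] [HasShift C ℤ] [∀ n : ℤ, (CategoryTheory.shiftFunctor C n).Additive]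
  [Pretriangulated C] [HasFiniteBiproducts C]

set_option linter.unusedSectionVars false

namespace St16

/-- kills all degrees `≤ b` : `Hom(M⟦j⟧, X) = 0` for `j ≤ b`. -/
def Kle (M : C) (b : ℤ) (X : C) : Prop := ∀ j : ℤ, j ≤ b → ∀ f : M⟦j⟧ ⟶ X, f = 0

/-- kills all degrees `≥ b`. -/
def Kge (M : C) (b : ℤ) (X : C) : Prop := ∀ j : ℤ, b ≤ j → ∀ f : M⟦j⟧ ⟶ X, f = 0

variable {M : C}

lemma kle_mono {b b' : ℤ} {X : C} (h : b' ≤ b) (hX : Kle M b X) : Kle M b' X :=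
  fun j hj f => hX j (hj.trans h) f

lemma kge_mono {b b' : ℤ} {X : C} (h : b ≤ b') (hX : Kge M b X) : Kge M b' X :=
  fun j hj f => hX j (h.trans hj) f

lemma kle_of_iso {b : ℤ} {X Y : C} (e : X ≅ Y) (hX : Kle M b X) : Kle M b Y := by
  intro j hj f
  have h0 : f ≫ e.inv = 0 := hX j hj (f ≫ e.inv)
  calc f = (f ≫ e.inv) ≫ e.hom := by simp
  _ = 0 := by rw [h0]; simp

lemma kge_of_iso {b : ℤ} {X Y : C} (e : X ≅ Y) (hX : Kge M b X) : Kge M b Y := by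
  intro j hj f
  have h0 : f ≫ e.inv = 0 := hX j hj (f ≫ e.inv)
  calc f = (f ≫ e.inv) ≫ e.hom := by simp
  _ = 0 := by rw [h0]; simp

lemma tleZ_iff {X : C} : TleZ M X ↔ Kle M (-1) X := by
  constructor
  · intro h j hj f; exact h j (by omega) f
  · intro h j hj f; exact h j (by omega) f

lemma tgeZ_iff {X : C} : TgeZ M X ↔ Kge M 1 X := by
  constructor
  · intro h j hj f; exact h j (by omega) f
  · intro h j hj f; exact h j (by omega) f

lemma zero_of_iso_comp {A' A B : C} (e : A' ≅ A) {f : A ⟶ B} (h : e.hom ≫ f = 0) : f = 0 := by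
  rw [← cancel_epi e.hom, h, comp_zero]

lemma zero_of_comp_iso {A B B' : C} (e : B ≅ B') {f : A ⟶ B} (h : f ≫ e.hom = 0) : f = 0 := by
  rw [← cancel_mono e.hom, h, zero_comp]

lemma eq_zero_of_shift_eq_zero {m : ℤ} {A B : C} (f : A ⟶ B)
    (h : (shiftFunctor C m).map f = 0) : f = 0 := by
  apply (shiftFunctor C m).map_injective
  rw [h, Functor.map_zero]

/-- `M⟦i+j⟧ ≅ M⟦i⟧⟦j⟧`. -/
noncomputable def shAdd (X : C) (i j t : ℤ) (h : i + j = t) : X⟦t⟧ ≅ X⟦i⟧⟦j⟧ :=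
  (shiftFunctorAdd' C i j t h).app X

/-- `X⟦a⟧⟦-a⟧ ≅ X`. -/
noncomputable def shCancel (X : C) (a b : ℤ) (h : a + b = 0) : X⟦a⟧⟦b⟧ ≅ X :=
  (shiftFunctorCompIsoId C a b h).app X

lemma kle_shift {b : ℤ} {X : C} (hX : Kle M b X) (a : ℤ) : Kle M (b + a) (X⟦a⟧) := by
  intro j hj f
  have h1 : (shAdd M j (-a) (j - a) (by ring)).hom ≫ ((shiftFunctor C (-a)).map f
      ≫ (shCancel X a (-a) (by ring)).hom) = 0 :=
    hX (j - a) (by omega) _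
  exact eq_zero_of_shift_eq_zero f (zero_of_comp_iso _ (zero_of_iso_comp _ h1))

lemma kge_shift {b : ℤ} {X : C} (hX : Kge M b X) (a : ℤ) : Kge M (b + a) (X⟦a⟧) := by
  intro j hj f
  have h1 : (shAdd M j (-a) (j - a) (by ring)).hom ≫ ((shiftFunctor C (-a)).map f
      ≫ (shCancel X a (-a) (by ring)).hom) = 0 :=
    hX (j - a) (by omega) _
  exact eq_zero_of_shift_eq_zero f (zero_of_comp_iso _ (zero_of_iso_comp _ h1))

lemma kle_shift' {b : ℤ} {X : C} (a b' : ℤ) (hX : Kle M b X) (h : b + a = b') :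
    Kle M b' (X⟦a⟧) := h ▸ kle_shift hX a

lemma kge_shift' {b : ℤ} {X : C} (a b' : ℤ) (hX : Kge M b X) (h : b + a = b') :
    Kge M b' (X⟦a⟧) := h ▸ kge_shift hX a

/-- P-lemma: every object of `thick(M)` only "tests" `Z` in `M`-degrees below a finite bound. -/
lemma thick_bound (hsilt : ∀ n : ℤ, 0 < n → ∀ f : M ⟶ M⟦n⟧, f = 0)
    (X : C) (hX : inThick M X) :
    ∃ b : ℤ, ∀ Z : C, Kle M b Z → ∀ f : X ⟶ Z, f = 0 := by
  induction hX with
  | base =>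
      refine ⟨0, fun Z hZ f => ?_⟩
      have e : M⟦(0 : ℤ)⟧ ≅ M := (shiftFunctorZero C ℤ).app M
      exact zero_of_iso_comp e (hZ 0 le_rfl (e.hom ≫ f))
  | shift X a hX ih =>
      obtain ⟨b, hb⟩ := ih
      refine ⟨b + a, fun Z hZ f => ?_⟩
      have h1 : (shCancel X a (-a) (by ring)).symm.hom ≫ (shiftFunctor C (-a)).map f = 0 := by
        have : Kle M b (Z⟦(-a : ℤ)⟧) := kle_mono (le_of_eq (by ring)) (kle_shift hZ (-a))
        exact hb _ this _
      exact eq_zero_of_shift_eq_zero f (zero_of_iso_comp _ h1)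
  | retractOf X Y hY hretr ih =>
      obtain ⟨b, hb⟩ := ih
      obtain ⟨i, r, hir⟩ := hretr
      refine ⟨b, fun Z hZ f => ?_⟩
      have : r ≫ f = 0 := hb Z hZ _
      calc f = (i ≫ r) ≫ f := by rw [hir]; simp
      _ = i ≫ (r ≫ f) := by simp
      _ = 0 := by rw [this]; simp
  | ext2 T hT h1 h3 ih1 ih3 =>
      obtain ⟨b1, hb1⟩ := ih1
      obtain ⟨b3, hb3⟩ := ih3
      refine ⟨max b1 b3, fun Z hZ f => ?_⟩
      have hz1 : T.mor₁ ≫ f = 0 := hb1 Z (kle_mono (le_max_left _ _) hZ) _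
      obtain ⟨g, hg⟩ := Triangle.yoneda_exact₂ T hT f hz1
      rw [hg, hb3 Z (kle_mono (le_max_right _ _) hZ) g, comp_zero]

/-! ### Serre-duality toolkit -/

/-- all maps `A ⟶ B` vanish. -/
def HZ {C₀ : Type*} [Category C₀] [Preadditive C₀] (A B : C₀) : Prop := ∀ f : A ⟶ B, f = 0

lemma hz_iso_src {A' A B : C} (e : A' ≅ A) (h : HZ A B) : HZ A' B := by
  intro f
  have h0 : e.inv ≫ f = 0 := h _
  calc f = e.hom ≫ e.inv ≫ f := by simp
  _ = 0 := by rw [h0]; simp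

lemma hz_iso_tgt {A B B' : C} (e : B ≅ B') (h : HZ A B) : HZ A B' := by
  intro f
  have h0 : f ≫ e.inv = 0 := h _
  calc f = (f ≫ e.inv) ≫ e.hom := by simp
  _ = 0 := by rw [h0]; simp

lemma hz_shift (a : ℤ) {A B : C} (h : HZ A B) : HZ (A⟦a⟧) (B⟦a⟧) := by
  intro f
  refine eq_zero_of_shift_eq_zero (m := -a) f ?_
  have e1 : A ≅ (A⟦a⟧)⟦(-a : ℤ)⟧ := (shCancel A a (-a) (by ring)).symm
  have e2 : (B⟦a⟧)⟦(-a : ℤ)⟧ ≅ B := shCancel B a (-a) (by ring)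
  have h0 : e1.hom ≫ ((shiftFunctor C (-a)).map f ≫ e2.hom) = 0 := h _
  exact zero_of_comp_iso _ (zero_of_iso_comp _ h0)

lemma hz_adj {A B : C} (a b : ℤ) (hab : a + b = 0) (h : HZ A (B⟦b⟧)) : HZ (A⟦a⟧) B :=
  hz_iso_tgt (shCancel B b a (by omega)) (hz_shift a h)

lemma hz_adj' {A B : C} (a b : ℤ) (hab : a + b = 0) (h : HZ (A⟦a⟧) B) : HZ A (B⟦b⟧) :=
  hz_iso_src (shCancel A a b hab).symm (hz_shift b h)

section Serre

variable (S : SerreFunctor k C)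

lemma pairing_zero_left {X Y : C} (h : Y ⟶ S.F.obj X) :
    S.pairing X Y 0 h = 0 := by
  rw [map_zero]; rfl

lemma pairing_zero_right {X Y : C} (t : X ⟶ Y) :
    S.pairing X Y t 0 = 0 := map_zero _

/-- right nondegeneracy of the Serre pairing. -/
lemma pairing_nondeg_right {X Y : C} (h : Y ⟶ S.F.obj X)
    (hh : ∀ t : X ⟶ Y, S.pairing X Y t h = 0) : h = 0 := by
  rw [← Module.forall_dual_apply_eq_zero_iff (R := k)]
  intro φ
  obtain ⟨t, rfl⟩ : ∃ t, S.pairing X Y t = φ := ⟨(S.pairing X Y).symm φ, by simp⟩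
  exact hh t

lemma serre_from {X Y : C} (h : HZ X Y) : HZ Y (S.F.obj X) := by
  intro g
  refine pairing_nondeg_right S g (fun t => ?_)
  rw [h t, pairing_zero_left]

lemma serre_to {X Y : C} (h : HZ Y (S.F.obj X)) : HZ X Y := by
  intro t
  have h1 : S.pairing X Y t = 0 := by
    apply LinearMap.ext
    intro g
    rw [h g, pairing_zero_right]
    rfl
  have h2 : S.pairing X Y t = S.pairing X Y 0 := by rw [h1, map_zero]
  exact (S.pairing X Y).injective h2

lemma serre_exists {X Y : C} (g : Y ⟶ S.F.obj X) (hg : g ≠ 0) :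
    ∃ t : X ⟶ Y, S.pairing X Y t g ≠ 0 := by
  by_contra hcon
  push_neg at hcon
  exact hg (pairing_nondeg_right S g hcon)

/-- The Serre functor is additive. -/
lemma F_additive : S.F.Additive := by
  constructor
  intro X Y f g
  -- test against the pairing
  have key : ∀ (u : X ⟶ Y) (t : Y ⟶ S.F.obj X),
      S.pairing Y (S.F.obj X) t (S.F.map u) = S.pairing X (S.F.obj X) (u ≫ t) (𝟙 _) := by
    intro u t
    have := S.natural_left u t (𝟙 (S.F.obj X))
    rw [this, Category.id_comp]
  have hdiff : ∀ t : Y ⟶ S.F.obj X,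
      S.pairing Y (S.F.obj X) t (S.F.map (f + g) - (S.F.map f + S.F.map g)) = 0 := by
    intro t
    rw [map_sub, map_add]
    rw [key (f + g) t, key f t, key g t]
    rw [Preadditive.add_comp, map_add]
    change _ + _ - (_ + _) = (0 : k)
    ring
  have := pairing_nondeg_right S _ hdiff
  rw [sub_eq_zero] at this
  exact this

end Serre
/-! ### equivalence transports -/

section SerreEquiv

variable (S : SerreFunctor k C)

/-- counit iso `F (F⁻¹ B) ≅ B`. -/
noncomputable def cIso (B : C) : S.F.obj (S.inv.obj B) ≅ B :=
  letI := S.isEquiv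
  S.F.asEquivalence.counitIso.app B

lemma hz_F {A B : C} (h : HZ A B) : HZ (S.F.obj A) (S.F.obj B) := by
  letI := S.isEquiv
  haveI := F_additive S
  intro g
  obtain ⟨h', rfl⟩ := S.F.map_surjective g
  rw [h h', Functor.map_zero]

lemma hz_F_rev {A B : C} (h : HZ (S.F.obj A) (S.F.obj B)) : HZ A B := by
  letI := S.isEquiv
  haveI := F_additive S
  intro f
  apply S.F.map_injective
  rw [h (S.F.map f), Functor.map_zero]

/-- `HZ (F A) B` from `HZ A (F⁻¹ B)`. -/
lemma hz_V8 {A B : C} (h : HZ A (S.inv.obj B)) : HZ (S.F.obj A) B :=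
  hz_iso_tgt (cIso S B) (hz_F S h)

/-- `HZ A (F⁻¹ B)` from `HZ (F A) B`. -/
lemma hz_V8' {A B : C} (h : HZ (S.F.obj A) B) : HZ A (S.inv.obj B) :=
  hz_F_rev S (hz_iso_tgt (cIso S B).symm h)

/-- `HZ Y B` from `HZ (F⁻¹ B) Y`. -/
lemma hz_V7 {Y B : C} (h : HZ (S.inv.obj B) Y) : HZ Y B :=
  hz_iso_tgt (cIso S B) (serre_from S h)

/-- `HZ (F⁻¹ B) Y` from `HZ Y B`. -/
lemma hz_V7' {Y B : C} (h : HZ Y B) : HZ (S.inv.obj B) Y :=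
  serre_to S (hz_iso_tgt (cIso S B).symm h)

end SerreEquiv

/-! ### approximations and the two orthogonality lemmas -/

section Approx

variable {M : C}

lemma silt_hz (hsilt : ∀ n : ℤ, 0 < n → ∀ f : M ⟶ M⟦n⟧, f = 0)
    {a b : ℤ} (hab : a < b) : HZ (M⟦a⟧) (M⟦b⟧) := by
  have h0 : HZ M (M⟦b - a⟧) := fun f => hsilt (b - a) (by omega) f
  have h1 := hz_shift a h0
  exact hz_iso_tgt (shAdd M (b - a) a b (by ring)).symm h1

lemma approx_step (hfin : HomFinite k C) (Z : C) (j₀ : ℤ) :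
    ∃ (P Z' : C) (φ : P ⟶ Z) (π : Z ⟶ Z') (δ : Z' ⟶ P⟦(1:ℤ)⟧),
      Triangle.mk φ π δ ∈ (distTriang C) ∧
      (∀ ψ : M⟦j₀⟧ ⟶ Z, ∃ lam : M⟦j₀⟧ ⟶ P, lam ≫ φ = ψ) ∧
      (∀ Y : C, HZ (M⟦j₀⟧) Y → HZ P Y) ∧
      (∀ A : C, HZ A (M⟦j₀⟧) → HZ A P) := by
  haveI := hfin (M⟦j₀⟧) Z
  set V := (M⟦j₀⟧ ⟶ Z) with hV
  let b := Module.finBasis k V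
  let P := ⨁ (fun _ : Fin (Module.finrank k V) => M⟦j₀⟧)
  let φ : P ⟶ Z := biproduct.desc (fun i => b i)
  obtain ⟨Z', π, δ, hdist⟩ := Pretriangulated.distinguished_cocone_triangle φ
  refine ⟨P, Z', φ, π, δ, hdist, ?_, ?_, ?_⟩
  · intro ψ
    refine ⟨biproduct.lift (fun i => b.repr ψ i • 𝟙 _), ?_⟩
    rw [biproduct.lift_desc]
    have heach : ∀ i : Fin (Module.finrank k V),
        (b.repr ψ i • 𝟙 (M⟦j₀⟧)) ≫ b i = b.repr ψ i • b i := by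
      intro i; rw [Linear.smul_comp, Category.id_comp]
    rw [Finset.sum_congr rfl (fun i _ => heach i)]
    exact b.sum_repr ψ
  · intro Y hY f
    apply biproduct.hom_ext'
    intro i
    simp only [comp_zero]
    exact hY _
  · intro A hA f
    apply biproduct.hom_ext
    intro i
    simp only [zero_comp]
    exact hA _

/-- the key property of the cone of an approximation triangle. -/
lemma approx_cone_kle (hsilt : ∀ n : ℤ, 0 < n → ∀ f : M ⟶ M⟦n⟧, f = 0)
    {Z P Z' : C} {φ : P ⟶ Z} {π : Z ⟶ Z'} {δ : Z' ⟶ P⟦(1:ℤ)⟧} {m : ℤ}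
    (hdist : Triangle.mk φ π δ ∈ (distTriang C))
    (happrox : ∀ ψ : M⟦m + 1⟧ ⟶ Z, ∃ lam : M⟦m + 1⟧ ⟶ P, lam ≫ φ = ψ)
    (hP : ∀ A : C, HZ A (M⟦m + 1⟧) → HZ A P)
    (hZ : Kle M m Z) : Kle M (m + 1) Z' := by
  intro j hj ψ'
  have h0 : HZ (M⟦j⟧⟦(-1:ℤ)⟧) P := by
    refine hP _ (hz_iso_src (shAdd M j (-1) (j-1) (by ring)).symm ?_)
    exact silt_hz hsilt (by omega)
  have h1 : HZ (M⟦j⟧) (P⟦(1:ℤ)⟧) := hz_adj' (-1) 1 (by ring) h0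
  have hδ : ψ' ≫ δ = 0 := h1 _
  obtain ⟨χ, hχ⟩ := Triangle.coyoneda_exact₃ _ hdist ψ' hδ
  simp only [Triangle.mk_obj₂, Triangle.mk_mor₂] at hχ
  rcases lt_or_eq_of_le hj with hlt | heq
  · rw [hχ, show χ = 0 from hZ j (by omega) χ]; exact zero_comp
  · subst heq
    obtain ⟨lam, hlam⟩ := happrox χ
    have hz0 : φ ≫ π = 0 := comp_distTriang_mor_zero₁₂ _ hdist
    rw [hχ, ← hlam]; exact (Category.assoc lam φ π).trans ((congrArg (lam ≫ ·) hz0).trans comp_zero)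

/-- L1': "coresolution" orthogonality.  If `W` has no maps to `M⟦i⟧` for `i > c`
and `Z` kills degrees `≤ c`, then `HZ W Z`. -/
lemma L1' (hfin : HomFinite k C)
    (hsilt : ∀ n : ℤ, 0 < n → ∀ f : M ⟶ M⟦n⟧, f = 0)
    (hgen : ∀ X : C, inThick M X)
    {W : C} (c : ℤ) (hW : ∀ i : ℤ, c < i → HZ W (M⟦i⟧))
    {Z : C} (hZ : Kle M c Z) : HZ W Z := by
  obtain ⟨b, hb⟩ := thick_bound hsilt W (hgen W)
  have key : ∀ (t : ℕ) (Z : C), Kle M (max b c - t) Z → c ≤ max b c - t → HZ W Z := by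
    intro t
    induction t with
    | zero =>
        intro Z hZ' _
        exact fun f => hb Z (kle_mono (by simp) hZ') f
    | succ t ih =>
        intro Z hZ' hguard f
        have hcast : ((t+1 : ℕ) : ℤ) = (t : ℤ) + 1 := by push_cast; ring
        rw [hcast] at hZ' hguard
        set m₁ : ℤ := max b c - ((t : ℤ) + 1) with hm₁
        obtain ⟨P, Z', φ, π, δ, hdist, happrox, hPl, hPr⟩ :=
          approx_step (M := M) hfin Z (m₁ + 1)
        have hZ'' : Kle M (max b c - t) Z' := by
          have h1 := approx_cone_kle (m := m₁) hsilt hdist happrox hPr hZ'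
          have h2 : m₁ + 1 = max b c - (t : ℤ) := by omega
          rwa [h2] at h1
        have hfπ : f ≫ π = 0 := ih Z' hZ'' (by omega) _
        obtain ⟨g, hg⟩ := Triangle.coyoneda_exact₂ _ hdist f hfπ
        have hgz : g = 0 := hPr W (hW (m₁ + 1) (by omega)) g
        rw [hg, hgz]; exact zero_comp
  intro f
  refine key (max b c - c).toNat Z ?_ ?_ f
  · have : ((max b c - c).toNat : ℤ) = max b c - c := Int.toNat_of_nonneg (by omega)
    rw [this]
    exact kle_mono (by omega) hZ
  · have : ((max b c - c).toNat : ℤ) = max b c - c := Int.toNat_of_nonneg (by omega)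
    omega

/-- E1: orthogonality `HZ Z Y` for `Z` killing degrees `≤ 0` and `Y` killing degrees `≥ 1`. -/
lemma E1 (hfin : HomFinite k C) (S : SerreFunctor k C)
    (hsilt : ∀ n : ℤ, 0 < n → ∀ f : M ⟶ M⟦n⟧, f = 0)
    (hgen : ∀ X : C, inThick M X)
    {Z Y : C} (hZ : Kle M 0 Z) (hY : Kge M 1 Y) : HZ Z Y := by
  obtain ⟨b, hb⟩ := thick_bound hsilt (S.inv.obj Y) (hgen _)
  have endpoint : ∀ Z₀ : C, Kle M b Z₀ → HZ Z₀ Y := by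
    intro Z₀ hZ₀
    refine hz_V7 S ?_
    exact fun g => hb Z₀ hZ₀ g
  have key : ∀ (t : ℕ) (Z : C), Kle M (max b 0 - t) Z → 0 ≤ max b 0 - t → HZ Z Y := by
    intro t
    induction t with
    | zero =>
        intro Z hZ' _
        exact endpoint Z (kle_mono (by simp) hZ')
    | succ t ih =>
        intro Z hZ' hguard f
        have hcast : ((t+1 : ℕ) : ℤ) = (t : ℤ) + 1 := by push_cast; ring
        rw [hcast] at hZ' hguard
        set m₁ : ℤ := max b 0 - ((t : ℤ) + 1) with hm₁
        obtain ⟨P, Z', φ, π, δ, hdist, happrox, hPl, hPr⟩ :=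
          approx_step (M := M) hfin Z (m₁ + 1)
        have hZ'' : Kle M (max b 0 - t) Z' := by
          have h1 := approx_cone_kle (m := m₁) hsilt hdist happrox hPr hZ'
          have h2 : m₁ + 1 = max b 0 - (t : ℤ) := by omega
          rwa [h2] at h1
        have hφf : φ ≫ f = 0 := hPl Y (hY (m₁ + 1) (by omega)) _
        obtain ⟨g, hg⟩ := Triangle.yoneda_exact₂ _ hdist f hφf
        rw [hg, show g = 0 from ih Z' hZ'' (by omega) g]; exact comp_zero
  intro f
  refine key (max b 0).toNat Z ?_ ?_ f
  · have : ((max b 0).toNat : ℤ) = max b 0 := Int.toNat_of_nonneg (by omega)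
    rw [this]
    exact kle_mono (by omega) hZ
  · have : ((max b 0).toNat : ℤ) = max b 0 := Int.toNat_of_nonneg (by omega)
    omega

lemma hz_unshift {A B : C} (a : ℤ) (h : HZ (A⟦a⟧) (B⟦a⟧)) : HZ A B := by
  have h1 := hz_shift (-a) h
  exact hz_iso_src (shCancel A a (-a) (by ring)).symm
    (hz_iso_tgt (shCancel B a (-a) (by ring)) h1)

/-- E1 with a general gap. -/
lemma E1gen (hfin : HomFinite k C) (S : SerreFunctor k C)
    (hsilt : ∀ n : ℤ, 0 < n → ∀ f : M ⟶ M⟦n⟧, f = 0)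
    (hgen : ∀ X : C, inThick M X)
    (a : ℤ) {Z Y : C} (hZ : Kle M a Z) (hY : Kge M (a+1) Y) : HZ Z Y := by
  refine hz_unshift (-a) (E1 hfin S hsilt hgen ?_ ?_)
  · exact kle_shift' (-a) 0 hZ (by ring)
  · exact kge_shift' (-a) 1 hY (by ring)

end Approx
/-! ### the `d`-silting column and closure under `ν_d⁻¹` -/

section Closure

variable (S : SerreFunctor k C) (d : ℤ) {M : C}

/-- the column `Hom(F(M⟦t⟧), M⟦v⟧) = 0` for `v - t > d`, derived from the `d`-silting
condition by pure Serre-duality moves. -/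
lemma col_G (hds : siltGE M (S.nudInv d M)) {t v : ℤ} (htv : d < v - t) :
    HZ (S.F.obj (M⟦t⟧)) (M⟦v⟧) := by
  have h0 : HZ M (((S.inv.obj M)⟦d⟧)⟦v - t - d⟧) :=
    fun f => hds (v - t - d) (by omega) f
  have h1 : HZ M ((S.inv.obj M)⟦v - t⟧) :=
    hz_iso_tgt (shAdd (S.inv.obj M) d (v - t - d) (v - t) (by ring)).symm h0
  have h2 : HZ (M⟦t⟧) ((S.inv.obj M)⟦v⟧) :=
    hz_iso_tgt (shAdd (S.inv.obj M) (v - t) t v (by ring)).symm (hz_shift t h1)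
  have h3 : HZ ((S.inv.obj M)⟦v⟧) (S.F.obj (M⟦t⟧)) := serre_from S h2
  have h4 : HZ (S.inv.obj M) ((S.F.obj (M⟦t⟧))⟦(-v : ℤ)⟧) := hz_adj' v (-v) (by ring) h3
  have h5 : HZ ((S.F.obj (M⟦t⟧))⟦(-v : ℤ)⟧) M := hz_V7 S h4
  exact hz_adj' (-v) v (by ring) h5

/-- `ν_d⁻¹` preserves the classes `Kle b`. -/
lemma closN (hfin : HomFinite k C)
    (hsilt : ∀ n : ℤ, 0 < n → ∀ f : M ⟶ M⟦n⟧, f = 0)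
    (hgen : ∀ X : C, inThick M X)
    (hds : siltGE M (S.nudInv d M))
    {b : ℤ} {X : C} (hX : Kle M b X) : Kle M b (S.nudInv d X) := by
  intro j hj
  have h2 : HZ (S.F.obj (M⟦j - d⟧)) X := by
    refine L1' hfin hsilt hgen j (fun i hi => ?_) (kle_mono hj hX)
    exact col_G S d hds (by omega)
  have h1 : HZ (M⟦j - d⟧) (S.inv.obj X) := hz_V8' S h2
  have h1' : HZ ((M⟦j⟧)⟦(-d : ℤ)⟧) (S.inv.obj X) :=
    hz_iso_src (shAdd M j (-d) (j - d) (by ring)).symm h1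
  have h : HZ (M⟦j⟧) ((S.inv.obj X)⟦d⟧) := hz_adj' (-d) d (by ring) h1'
  exact fun f => h f

lemma nudInvIter_succ' (m : ℕ) (X : C) :
    S.nudInvIter d (m+1) X = S.nudInv d (S.nudInvIter d m X) :=
  Function.iterate_succ_apply' _ _ _

lemma nudInvIter_zero (X : C) : S.nudInvIter d 0 X = X := rfl

lemma closN_iter (hfin : HomFinite k C)
    (hsilt : ∀ n : ℤ, 0 < n → ∀ f : M ⟶ M⟦n⟧, f = 0)
    (hgen : ∀ X : C, inThick M X)
    (hds : siltGE M (S.nudInv d M))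
    {b : ℤ} {X : C} (hX : Kle M b X) (m : ℕ) : Kle M b (S.nudInvIter d m X) := by
  induction m with
  | zero => exact hX
  | succ m ih =>
      rw [nudInvIter_succ']
      exact closN S d hfin hsilt hgen hds ih

end Closure
/-! ### the functor `ν_d⁻¹` and its powers -/

section Npow

variable (S : SerreFunctor k C) (d : ℤ)

/-- `ν_d⁻¹` as a functor. -/
noncomputable def Nfun : C ⥤ C := S.inv ⋙ shiftFunctor C d

lemma Nfun_isEquiv : (Nfun S d).IsEquivalence := by
  letI := S.isEquiv
  haveI : (S.inv).IsEquivalence := by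
    letI := S.isEquiv
    exact Functor.isEquivalence_inv S.F
  haveI : (shiftFunctor C d).IsEquivalence := (shiftEquiv C d).isEquivalence_functor
  exact Functor.isEquivalence_trans _ _

lemma inv_additive : (S.inv).Additive := by
  letI := S.isEquiv
  haveI : (S.F.asEquivalence.functor).Additive := F_additive S
  exact (S.F.asEquivalence).inverse_additive

lemma Nfun_additive : (Nfun S d).Additive := by
  haveI := inv_additive S
  exact Functor.instAdditiveComp _ _

/-- powers of `ν_d⁻¹` as functors. -/
noncomputable def NpowF : ℕ → (C ⥤ C)
  | 0 => 𝟭 C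
  | (m + 1) => Nfun S d ⋙ NpowF m

lemma NpowF_isEquiv (m : ℕ) : (NpowF S d m).IsEquivalence := by
  induction m with
  | zero => exact Functor.isEquivalence_refl
  | succ m ih =>
      haveI := Nfun_isEquiv S d
      haveI := ih
      exact Functor.isEquivalence_trans _ _

lemma NpowF_additive (m : ℕ) : (NpowF S d m).Additive := by
  induction m with
  | zero => exact Functor.instAdditiveId
  | succ m ih =>
      haveI := Nfun_additive S d
      haveI := ih
      exact Functor.instAdditiveComp _ _

lemma NpowF_obj_eq (m : ℕ) (X : C) : (NpowF S d m).obj X = S.nudInvIter d m X := by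
  induction m generalizing X with
  | zero => rfl
  | succ m ih =>
      have h1 : (NpowF S d (m+1)).obj X = (NpowF S d m).obj (S.nudInv d X) := rfl
      rw [h1, ih]
      exact (Function.iterate_succ_apply _ _ _).symm

end Npow
/-! ### heart-epimorphisms and their transport along powers of `ν_d⁻¹` -/

section EpiTransport

variable (S : SerreFunctor k C) (d : ℤ) {M : C}

lemma heartEpi_comp {A B D : C} {f : A ⟶ B} {g : B ⟶ D}
    (hf : heartEpi M f) (hg : heartEpi M g) : heartEpi M (f ≫ g) := by
  intro T hT t ht
  rw [Category.assoc] at ht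
  exact hg T hT t (hf T hT (g ≫ t) ht)

lemma heartEpi_id (A : C) : heartEpi M (𝟙 A) := by
  intro T hT t ht
  rwa [Category.id_comp] at ht

lemma inHeart_kge {T : C} (hT : inHeart M T) : Kge M 1 T := tgeZ_iff.1 hT.2

lemma inHeart_kle {T : C} (hT : inHeart M T) : Kle M (-1) T := tleZ_iff.1 hT.1

/-- heart-epimorphy of all `ν_d⁻ᵐ`-transports of a map whose cone kills degrees `≤ 0`. -/
lemma epi_transport (hfin : HomFinite k C)
    (hsilt : ∀ n : ℤ, 0 < n → ∀ f : M ⟶ M⟦n⟧, f = 0)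
    (hgen : ∀ X : C, inThick M X)
    (hds : siltGE M (S.nudInv d M))
    (T : Triangle C) (hdist : T ∈ (distTriang C))
    (hCw : Kle M 0 T.obj₃) (m : ℕ) : heartEpi M ((NpowF S d m).map T.mor₁) := by
  intro T₀ hT t ht
  haveI := NpowF_isEquiv S d m
  haveI := NpowF_additive S d m
  obtain ⟨T', e⟩ : ∃ T' : C, Nonempty ((NpowF S d m).obj T' ≅ T₀) :=
    ⟨(NpowF S d m).objPreimage T₀, ⟨(NpowF S d m).objObjPreimageIso T₀⟩⟩
  obtain ⟨e⟩ := e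
  obtain ⟨t', hmain⟩ : ∃ t' : T.obj₂ ⟶ T', (NpowF S d m).map t' = t ≫ e.inv :=
    ⟨(NpowF S d m).preimage _, (NpowF S d m).map_preimage _⟩
  have hwt' : T.mor₁ ≫ t' = 0 := by
    apply (NpowF S d m).map_injective
    rw [Functor.map_comp, hmain, Functor.map_zero, ← Category.assoc, ht, zero_comp]
  obtain ⟨s, hs⟩ := Triangle.yoneda_exact₂ _ hdist t' hwt'
  have hsz : s = 0 := by
    apply (NpowF S d m).map_injective
    rw [Functor.map_zero]
    have hkle : Kle M 0 ((NpowF S d m).obj T.obj₃) := by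
      rw [NpowF_obj_eq]
      exact closN_iter S d hfin hsilt hgen hds hCw m
    have h1 : HZ ((NpowF S d m).obj T.obj₃) T₀ := E1 hfin S hsilt hgen hkle (inHeart_kge hT)
    have h2 : (NpowF S d m).map s ≫ e.hom = 0 := h1 _
    exact zero_of_comp_iso e h2
  have ht'z : t' = 0 := by
    rw [hs, hsz, comp_zero]
  have : t ≫ e.inv = 0 := by rw [← hmain, ht'z, Functor.map_zero]
  calc t = (t ≫ e.inv) ≫ e.hom := by simp
  _ = 0 := by rw [this]; simp

end EpiTransport
/-! ### truncation triangles -/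

section Trunc

variable {M : C}

/-- The `τ^{≥0}`-truncation triangle of an object of `T^{≤0}`, with heart quotient. -/
lemma tau_ge
    (hadj : ∀ X : C, ∃ (A B : C) (f : A ⟶ X) (g : X ⟶ B) (h : B ⟶ A⟦(1 : ℤ)⟧),
      Triangle.mk f g h ∈ (distTriang C) ∧ Kle M (-1) A ∧ Kge M 0 B)
    (V : C) (hV : Kle M (-1) V) :
    ∃ (A H : C) (a : A ⟶ V) (π : V ⟶ H) (w : H ⟶ A⟦(1 : ℤ)⟧),
      Triangle.mk a π w ∈ (distTriang C) ∧ Kle M 0 A ∧ inHeart M H := by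
  obtain ⟨A₀, B₀, f₀, g₀, h₀, hdist₀, hA₀, hB₀⟩ := hadj (V⟦(-1 : ℤ)⟧)
  have hdist₁ := Pretriangulated.Triangle.shift_distinguished _ hdist₀ 1
  set T₁ := (CategoryTheory.shiftFunctor (Triangle C) (1 : ℤ)).obj (Triangle.mk f₀ g₀ h₀) with hT₁
  have hobj₂ : T₁.obj₂ = (V⟦(-1 : ℤ)⟧)⟦(1 : ℤ)⟧ := rfl
  have hobj₁ : T₁.obj₁ = A₀⟦(1 : ℤ)⟧ := rfl
  have hobj₃ : T₁.obj₃ = B₀⟦(1 : ℤ)⟧ := rfl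
  have e : T₁.obj₂ ≅ V := shCancel V (-1) 1 (by ring)
  have hdist₂ : Triangle.mk (T₁.mor₁ ≫ e.hom) (e.inv ≫ T₁.mor₂) T₁.mor₃ ∈ (distTriang C) := by
    refine Pretriangulated.isomorphic_distinguished _ hdist₁ _ ?_
    exact Triangle.isoMk _ _ (Iso.refl _) e.symm (Iso.refl _) (by exact ((Category.assoc _ _ _).trans ((congrArg (T₁.mor₁ ≫ ·) e.hom_inv_id).trans (Category.comp_id _))).trans (Category.id_comp _).symm) (by exact Category.comp_id _) (by exact (congrArg (T₁.mor₃ ≫ ·) (CategoryTheory.Functor.map_id _ _)).trans ((Category.comp_id _).trans (Category.id_comp _).symm))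
  have hKleA : Kle M 0 T₁.obj₁ := by
    rw [hobj₁]; exact kle_shift' 1 0 hA₀ (by ring)
  refine ⟨T₁.obj₁, T₁.obj₃, T₁.mor₁ ≫ e.hom, e.inv ≫ T₁.mor₂, T₁.mor₃, hdist₂, hKleA, ?_, ?_⟩
  · -- TleZ of H
    rw [tleZ_iff]
    intro n hn ψ
    have hψδ : ψ ≫ T₁.mor₃ = 0 := by
      have hk : Kle M 1 (T₁.obj₁⟦(1:ℤ)⟧) := kle_shift' 1 1 hKleA (by ring)
      exact hk n (by omega) _
    obtain ⟨χ, hχ⟩ := Triangle.coyoneda_exact₃ _ hdist₂ ψ hψδ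
    simp only [Triangle.mk_obj₂, Triangle.mk_mor₂] at hχ
    rw [hχ, show χ = 0 from hV n (by omega) χ]; exact zero_comp
  · -- TgeZ of H
    rw [tgeZ_iff]
    rw [hobj₃]
    exact kge_shift' 1 1 hB₀ (by ring)

end Trunc
/-! ### the cone of a heart-epimorphism onto a heart object kills degrees ≤ 0 -/

section ConeEpi

variable {M : C}

lemma cone_epi_kle (S : SerreFunctor k C) (hfin : HomFinite k C)
    (hsilt : ∀ n : ℤ, 0 < n → ∀ f : M ⟶ M⟦n⟧, f = 0)
    (hgen : ∀ X : C, inThick M X)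
    (hadj : ∀ X : C, ∃ (A B : C) (f : A ⟶ X) (g : X ⟶ B) (h : B ⟶ A⟦(1 : ℤ)⟧),
      Triangle.mk f g h ∈ (distTriang C) ∧ Kle M (-1) A ∧ Kge M 0 B)
    {H S₀ Ce : C} {eb : H ⟶ S₀} {cc : S₀ ⟶ Ce} {δ : Ce ⟶ H⟦(1:ℤ)⟧}
    (hdist : Triangle.mk eb cc δ ∈ (distTriang C))
    (hH : inHeart M H) (hS : inHeart M S₀) (hepi : heartEpi M eb) :
    Kle M 0 Ce := by
  have hHshift : Kle M 0 (H⟦(1:ℤ)⟧) := kle_shift' 1 0 (inHeart_kle hH) (by ring)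
  -- Step A : no maps from Ce to heart objects
  have hA : ∀ T : C, inHeart M T → HZ Ce T := by
    intro T hT s
    have h1 : cc ≫ s = 0 := by
      refine hepi T hT (cc ≫ s) ?_
      have h0 : eb ≫ cc = 0 := comp_distTriang_mor_zero₁₂ _ hdist
      rw [← Category.assoc, h0, zero_comp]
    obtain ⟨g, hg⟩ := Triangle.yoneda_exact₃ _ hdist s h1
    have hgz : g = 0 := E1gen hfin S hsilt hgen 0 hHshift (inHeart_kge hT) g
    rw [hg, hgz]; exact comp_zero
  -- Step B : Kle (-1)
  have hB : Kle M (-1) Ce := by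
    intro n hn ψ
    have hψδ : ψ ≫ δ = 0 := hHshift n (by omega) _
    obtain ⟨χ, hχ⟩ := Triangle.coyoneda_exact₃ _ hdist ψ hψδ
    simp only [Triangle.mk_obj₂, Triangle.mk_mor₂] at hχ
    rw [hχ, show χ = 0 from inHeart_kle hS n (by omega) χ]; exact zero_comp
  -- Step C : retract trick for degree 0
  obtain ⟨A₁, H₀, a, π₁, w, hdist₁, hKleA₁, hH₀⟩ := tau_ge hadj Ce hB
  have hπ₁ : π₁ = 0 := hA H₀ hH₀ π₁
  obtain ⟨ρ, hρ⟩ := Triangle.coyoneda_exact₂ _ hdist₁ (𝟙 Ce) (by simp only [Triangle.mk_mor₂, hπ₁]; exact comp_zero)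
  simp only [Triangle.mk_obj₁, Triangle.mk_mor₁] at hρ
  intro j hj f
  have h2 : f ≫ ρ = 0 := hKleA₁ j hj _
  calc f = f ≫ 𝟙 Ce := by simp
  _ = (f ≫ ρ) ≫ a := by rw [hρ]; exact (Category.assoc _ _ _).symm
  _ = 0 := by rw [h2]; exact zero_comp

/-- the heart-epi transports of an `Ext^d`-edge between simples. -/
lemma edge_heartEpi (S : SerreFunctor k C) (hfin : HomFinite k C) (d : ℤ)
    (hsilt : ∀ n : ℤ, 0 < n → ∀ f : M ⟶ M⟦n⟧, f = 0)
    (hgen : ∀ X : C, inThick M X)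
    (hds : siltGE M (S.nudInv d M))
    (hadj : ∀ X : C, ∃ (A B : C) (f : A ⟶ X) (g : X ⟶ B) (h : B ⟶ A⟦(1 : ℤ)⟧),
      Triangle.mk f g h ∈ (distTriang C) ∧ Kle M (-1) A ∧ Kge M 0 B)
    {S₁ S₂ : C} (h₁ : SimpleInHeart M S₁) (h₂ : SimpleInHeart M S₂)
    {f : S₁ ⟶ S₂⟦d⟧} (hf : f ≠ 0) (m : ℕ) :
    ∃ v : (NpowF S d (m+1)).obj S₂ ⟶ (NpowF S d m).obj S₁, heartEpi M v := by
  -- construct a nonzero map γ : ν_d⁻¹ S₂ ⟶ S₁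
  have hf'' : ((shiftFunctor C (-d)).map f) ≫ (shCancel S₂ d (-d) (by ring)).hom ≠ 0 := by
    intro hcon
    exact hf (eq_zero_of_shift_eq_zero f (zero_of_comp_iso _ hcon))
  have hg : (((shiftFunctor C (-d)).map f) ≫ (shCancel S₂ d (-d) (by ring)).hom)
      ≫ (cIso S S₂).inv ≠ 0 := by
    intro hcon
    refine hf'' ?_
    have := congrArg (fun q => q ≫ (cIso S S₂).hom) hcon
    simpa using this
  obtain ⟨t, hpair⟩ := serre_exists S _ hg
  have ht : t ≠ 0 := by
    intro hcon
    rw [hcon] at hpair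
    exact hpair (pairing_zero_left S _)
  have hγ : ((shiftFunctor C d).map t) ≫ (shCancel S₁ (-d) d (by ring)).hom ≠ 0 := by
    intro hcon
    exact ht (eq_zero_of_shift_eq_zero t (zero_of_comp_iso _ hcon))
  set γ : (S.inv.obj S₂)⟦d⟧ ⟶ S₁ :=
    ((shiftFunctor C d).map t) ≫ (shCancel S₁ (-d) d (by ring)).hom with hγdef
  -- the source is in T^{≤0}
  have hVkle : Kle M (-1) ((S.inv.obj S₂)⟦d⟧) := by
    have : Kle M (-1) (S.nudInv d S₂) :=
      closN S d hfin hsilt hgen hds (inHeart_kle h₂.1)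
    exact this
  -- truncate and factor
  obtain ⟨A, H, a, π, w, hdistT, hKleA, hHheart⟩ := tau_ge hadj _ hVkle
  have haγ : a ≫ γ = 0 :=
    E1gen hfin S hsilt hgen 0 hKleA (inHeart_kge h₁.1) _
  obtain ⟨eb, heb⟩ := Triangle.yoneda_exact₂ _ hdistT γ haγ
  simp only [Triangle.mk_obj₃, Triangle.mk_mor₂] at heb
  have hebnz : eb ≠ 0 := by
    intro hcon
    rw [hcon] at heb
    exact hγ (heb.trans comp_zero)
  have hebepi : heartEpi M eb := by
    rcases h₁.2.2 H hHheart eb with h | h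
    · exact absurd h hebnz
    · exact h
  -- transport heart-epimorphy
  have hπepi : heartEpi M ((NpowF S d m).map π) := by
    have hrot := Pretriangulated.rot_of_distTriang _ hdistT
    have hk3 : Kle M 0 (Triangle.mk a π w).rotate.obj₃ := by
      have : Kle M 1 (A⟦(1:ℤ)⟧) := kle_shift' 1 1 hKleA (by ring)
      exact kle_mono (by omega) this
    exact epi_transport S d hfin hsilt hgen hds _ hrot hk3 m
  have hebepi' : heartEpi M ((NpowF S d m).map eb) := by
    obtain ⟨Ce, cc, δ, hdistc⟩ := Pretriangulated.distinguished_cocone_triangle eb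
    have hCe : Kle M 0 Ce :=
      cone_epi_kle S hfin hsilt hgen hadj hdistc hHheart h₁.1 hebepi
    exact epi_transport S d hfin hsilt hgen hds _ hdistc hCe m
  refine ⟨(NpowF S d m).map π ≫ (NpowF S d m).map eb, ?_⟩
  exact heartEpi_comp hπepi hebepi'

end ConeEpi
/-! ### transport to the shifted silting object `M⟦-1⟧` -/

section WorldShift

variable (S : SerreFunctor k C) (d : ℤ) {M : C}

lemma kle_ground_iff {b : ℤ} {Z : C} : Kle (M⟦(-1 : ℤ)⟧) b Z ↔ Kle M (b - 1) Z := by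
  constructor
  · intro h j hj f
    have h1 : (shAdd M (-1) (j + 1) j (by ring)).inv ≫ f = 0 := h (j + 1) (by omega) _
    exact zero_of_iso_comp (shAdd M (-1) (j + 1) j (by ring)).symm h1
  · intro h j hj f
    have h1 : (shAdd M (-1) j (j - 1) (by ring)).hom ≫ f = 0 := h (j - 1) (by omega) _
    exact zero_of_iso_comp _ h1

lemma kge_ground_iff {b : ℤ} {Z : C} : Kge (M⟦(-1 : ℤ)⟧) b Z ↔ Kge M (b - 1) Z := by
  constructor
  · intro h j hj f
    have h1 : (shAdd M (-1) (j + 1) j (by ring)).inv ≫ f = 0 := h (j + 1) (by omega) _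
    exact zero_of_iso_comp (shAdd M (-1) (j + 1) j (by ring)).symm h1
  · intro h j hj f
    have h1 : (shAdd M (-1) j (j - 1) (by ring)).hom ≫ f = 0 := h (j - 1) (by omega) _
    exact zero_of_iso_comp _ h1

lemma kle_ground {b : ℤ} {Z : C} (h : Kle M (b - 1) Z) : Kle (M⟦(-1 : ℤ)⟧) b Z :=
  kle_ground_iff.2 h

lemma kge_ground {b : ℤ} {Z : C} (h : Kge M (b - 1) Z) : Kge (M⟦(-1 : ℤ)⟧) b Z :=
  kge_ground_iff.2 h

lemma hsilt_shift (hsilt : ∀ n : ℤ, 0 < n → ∀ f : M ⟶ M⟦n⟧, f = 0) :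
    ∀ n : ℤ, 0 < n → ∀ f : M⟦(-1 : ℤ)⟧ ⟶ (M⟦(-1 : ℤ)⟧)⟦n⟧, f = 0 := by
  intro n hn
  have h1 : HZ (M⟦(-1 : ℤ)⟧) (M⟦n - 1⟧) := silt_hz hsilt (by omega)
  exact hz_iso_tgt (shAdd M (-1) n (n - 1) (by ring)) h1

lemma hgen_shift (hgen : ∀ X : C, inThick M X) : ∀ X : C, inThick (M⟦(-1 : ℤ)⟧) X := by
  have hM : inThick (M⟦(-1 : ℤ)⟧) M := by
    refine inThick.retractOf _ ((M⟦(-1 : ℤ)⟧)⟦(1 : ℤ)⟧)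
      (inThick.shift _ 1 inThick.base) ?_
    exact ⟨(shCancel M (-1) 1 (by ring)).inv, (shCancel M (-1) 1 (by ring)).hom, by simp⟩
  intro X
  induction hgen X with
  | base => exact hM
  | shift Y a _ ih => exact inThick.shift Y a ih
  | retractOf X' Y _ hr ih => exact inThick.retractOf X' Y ih hr
  | ext2 T hT _ _ ih1 ih3 => exact inThick.ext2 T hT ih1 ih3

lemma hds_shift (hds : siltGE M (S.nudInv d M)) :
    siltGE (M⟦(-1 : ℤ)⟧) (S.nudInv d (M⟦(-1 : ℤ)⟧)) := by
  intro n hn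
  have h1 : HZ (S.F.obj (M⟦-1 - d - n⟧)) (M⟦(-1 : ℤ)⟧) :=
    col_G S d hds (by omega)
  have h2 : HZ (M⟦-1 - d - n⟧) (S.inv.obj (M⟦(-1 : ℤ)⟧)) := hz_V8' S h1
  have e : ((M⟦(-1:ℤ)⟧)⟦(-n : ℤ)⟧)⟦(-d : ℤ)⟧ ≅ M⟦-1 - d - n⟧ := by
    refine Iso.trans ?_ (shAdd M (-1 - n) (-d) (-1 - d - n) (by ring)).symm
    exact (shiftFunctor C (-d)).mapIso (shAdd M (-1) (-n) (-1 - n) (by ring)).symm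
  have h3 : HZ (((M⟦(-1:ℤ)⟧)⟦(-n : ℤ)⟧)⟦(-d : ℤ)⟧) (S.inv.obj (M⟦(-1 : ℤ)⟧)) :=
    hz_iso_src e h2
  have h4 : HZ ((M⟦(-1:ℤ)⟧)⟦(-n : ℤ)⟧) ((S.inv.obj (M⟦(-1 : ℤ)⟧))⟦d⟧) :=
    hz_adj' (-d) d (by ring) h3
  have h5 : HZ (M⟦(-1:ℤ)⟧) (((S.inv.obj (M⟦(-1 : ℤ)⟧))⟦d⟧)⟦n⟧) :=
    hz_adj' (-n) n (by ring) h4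
  exact fun f => h5 f

lemma hadj_shift (hAdj : HasRightAdjacentTStructure M) :
    ∀ X : C, ∃ (A B : C) (f : A ⟶ X) (g : X ⟶ B) (h : B ⟶ A⟦(1 : ℤ)⟧),
      Triangle.mk f g h ∈ (distTriang C) ∧ Kle (M⟦(-1:ℤ)⟧) (-1) A ∧ Kge (M⟦(-1:ℤ)⟧) 0 B := by
  intro X
  obtain ⟨A₀, B₀, f₀, g₀, h₀, hdist₀, hA₀, hB₀⟩ := hAdj (X⟦(1 : ℤ)⟧)
  have hdist₁ := Pretriangulated.Triangle.shift_distinguished _ hdist₀ (-1)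
  set T₁ := (CategoryTheory.shiftFunctor (Triangle C) (-1 : ℤ)).obj (Triangle.mk f₀ g₀ h₀)
    with hT₁
  have e : T₁.obj₂ ≅ X := shCancel X 1 (-1) (by ring)
  refine ⟨T₁.obj₁, T₁.obj₃, T₁.mor₁ ≫ e.hom, e.inv ≫ T₁.mor₂, T₁.mor₃, ?_, ?_, ?_⟩
  · refine Pretriangulated.isomorphic_distinguished _ hdist₁ _ ?_
    exact Triangle.isoMk _ _ (Iso.refl _) e.symm (Iso.refl _) (by exact ((Category.assoc _ _ _).trans ((congrArg (T₁.mor₁ ≫ ·) e.hom_inv_id).trans (Category.comp_id _))).trans (Category.id_comp _).symm) (by exact Category.comp_id _) (by exact (congrArg (T₁.mor₃ ≫ ·) (CategoryTheory.Functor.map_id _ _)).trans ((Category.comp_id _).trans (Category.id_comp _).symm))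
  · -- Kle (M⟦-1⟧) (-1) (A₀⟦-1⟧)
    refine kle_ground ?_
    have h1 : Kle M (-1) A₀ := tleZ_iff.1 hA₀
    have h2 : Kle M (-2) (A₀⟦(-1:ℤ)⟧) := kle_shift' (-1) (-2) h1 (by ring)
    exact h2
  · -- Kge (M⟦-1⟧) 0 (B₀⟦-1⟧)
    refine kge_ground ?_
    have h1 : Kge M 0 B₀ := fun j hj f => hB₀ j hj f
    have h2 : Kge M (-1) (B₀⟦(-1:ℤ)⟧) := kge_shift' (-1) (-1) h1 (by ring)
    exact h2

lemma heart_unshift {T : C} (hT : inHeart (M⟦(-1:ℤ)⟧) T) : inHeart M (T⟦(1:ℤ)⟧) := by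
  obtain ⟨hTle, hTge⟩ := hT
  constructor
  · rw [tleZ_iff]
    have h1 : Kle M (-2) T := kle_ground_iff.1 (tleZ_iff.1 hTle)
    exact kle_shift' 1 (-1) h1 (by ring)
  · rw [tgeZ_iff]
    have h1 : Kge M 0 T := kge_ground_iff.1 (tgeZ_iff.1 hTge)
    exact kge_shift' 1 1 h1 (by ring)

lemma simple_shift {S₀ : C} (hS : SimpleInHeart M S₀) :
    SimpleInHeart (M⟦(-1:ℤ)⟧) (S₀⟦(-1:ℤ)⟧) := by
  obtain ⟨⟨hle, hge⟩, hnz, hdich⟩ := hS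
  refine ⟨⟨?_, ?_⟩, ?_, ?_⟩
  · rw [tleZ_iff]
    refine kle_ground ?_
    exact kle_shift' (-1) (-2) (tleZ_iff.1 hle) (by ring)
  · rw [tgeZ_iff]
    refine kge_ground ?_
    exact kge_shift' (-1) 0 (tgeZ_iff.1 hge) (by ring)
  · intro hz
    refine hnz ?_
    rw [IsZero.iff_id_eq_zero] at hz ⊢
    have h1 : (shiftFunctor C (-1 : ℤ)).map (𝟙 S₀) = 0 := by
      rw [CategoryTheory.Functor.map_id]
      exact hz
    exact eq_zero_of_shift_eq_zero _ h1
  · intro T hT f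
    have hT1 : inHeart M (T⟦(1:ℤ)⟧) := heart_unshift hT
    set e := shCancel S₀ (-1) 1 (by ring) with he
    set fhat : T⟦(1:ℤ)⟧ ⟶ S₀ := (shiftFunctor C (1:ℤ)).map f ≫ e.hom with hfhat
    rcases hdich (T⟦(1:ℤ)⟧) hT1 fhat with h | h
    · left
      have h1 : (shiftFunctor C (1:ℤ)).map f = 0 := zero_of_comp_iso e h
      exact eq_zero_of_shift_eq_zero f h1
    · right
      intro T₀ hT₀ g hfg
      have hT₀1 : inHeart M (T₀⟦(1:ℤ)⟧) := heart_unshift hT₀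
      set ghat : S₀ ⟶ T₀⟦(1:ℤ)⟧ := e.inv ≫ (shiftFunctor C (1:ℤ)).map g with hghat
      have hcomp : fhat ≫ ghat = 0 := by
        rw [hfhat, hghat]
        have : (shiftFunctor C (1:ℤ)).map f ≫ e.hom ≫ e.inv ≫ (shiftFunctor C (1:ℤ)).map g
            = (shiftFunctor C (1:ℤ)).map (f ≫ g) := by
          rw [Functor.map_comp]; simp
        rw [Category.assoc, this, hfg, Functor.map_zero]
      have hghat0 : ghat = 0 := h (T₀⟦(1:ℤ)⟧) hT₀1 ghat (by rw [← Category.assoc] at hcomp ⊢; exact hcomp)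
      have h1 : (shiftFunctor C (1:ℤ)).map g = 0 := by
        rw [hghat] at hghat0
        have := congrArg (fun q => e.hom ≫ q) hghat0
        simpa using this
      exact eq_zero_of_shift_eq_zero g h1

end WorldShift
/-! ### the main no-cycle argument -/

lemma main_noncycle (hfin : HomFinite k C) (S : SerreFunctor k C) (d : ℤ) (M : C)
    (hM : IsDSilting S d M) (hAdj : HasRightAdjacentTStructure M)
    (hnufin : ∀ X : C, ∃ N : ℕ, ∀ n : ℕ, N ≤ n → TleZ M (S.nudInvIter d n X))
    (n : ℕ) (hn : 0 < n) (Ss : ZMod n → C)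
    (hsimp : ∀ i, SimpleInHeart M (Ss i))
    (hcyc : ∀ i, ∃ f : Ss i ⟶ (Ss (i + 1))⟦d⟧, f ≠ 0) : False := by
  haveI : NeZero n := ⟨hn.ne'⟩
  have hsilt' := hsilt_shift (M := M) hM.1.presilting
  have hgen' := hgen_shift (M := M) hM.1.generates
  have hds' := hds_shift S d (M := M) hM.2
  have hadj' := hadj_shift (M := M) hAdj
  have hsimp' : ∀ i, SimpleInHeart (M⟦(-1:ℤ)⟧) ((Ss i)⟦(-1:ℤ)⟧) :=
    fun i => simple_shift (hsimp i)
  have hedge : ∀ i : ZMod n, ∃ f : (Ss i)⟦(-1:ℤ)⟧ ⟶ ((Ss (i+1))⟦(-1:ℤ)⟧)⟦d⟧, f ≠ 0 := by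
    intro i
    obtain ⟨f, hf⟩ := hcyc i
    refine ⟨(shiftFunctor C (-1:ℤ)).map f ≫ (shiftComm (Ss (i+1)) d (-1:ℤ)).hom, ?_⟩
    intro hcon
    exact hf (eq_zero_of_shift_eq_zero f (zero_of_comp_iso _ hcon))
  have hpack : ∀ (i : ZMod n) (m : ℕ),
      ∃ v : (NpowF S d (m+1)).obj ((Ss (i+1))⟦(-1:ℤ)⟧) ⟶
        (NpowF S d m).obj ((Ss i)⟦(-1:ℤ)⟧), heartEpi (M⟦(-1:ℤ)⟧) v := by
    intro i m
    obtain ⟨f, hf⟩ := hedge i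
    exact edge_heartEpi S hfin d hsilt' hgen' hds' hadj' (hsimp' i) (hsimp' (i+1)) hf m
  have chain : ∀ m : ℕ,
      ∃ u : (NpowF S d m).obj ((Ss ((0 : ZMod n) + (m : ZMod n)))⟦(-1:ℤ)⟧) ⟶
        (Ss (0 : ZMod n))⟦(-1:ℤ)⟧, heartEpi (M⟦(-1:ℤ)⟧) u := by
    intro m
    induction m with
    | zero =>
        have hidx : ((0 : ZMod n) + ((0:ℕ) : ZMod n)) = (0 : ZMod n) := by push_cast; ring
        rw [hidx]
        exact ⟨𝟙 _, heartEpi_id _⟩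
    | succ m ih =>
        obtain ⟨u, hu⟩ := ih
        obtain ⟨v, hv⟩ := hpack ((0 : ZMod n) + (m : ZMod n)) m
        have hidx : (0:ZMod n) + ((m+1 : ℕ) : ZMod n) = ((0:ZMod n) + (m : ZMod n)) + 1 := by
          push_cast; ring
        rw [hidx]
        exact ⟨v ≫ u, heartEpi_comp hv hu⟩
  obtain ⟨Nb, hNb⟩ := hnufin ((Ss (0 : ZMod n))⟦(-1:ℤ)⟧)
  set m := n * (Nb + 1) with hm
  have hmN : Nb ≤ m := by
    have := Nat.le_mul_of_pos_left (Nb + 1) hn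
    omega
  have hm0 : ((m : ℕ) : ZMod n) = 0 := by
    rw [hm]; push_cast [ZMod.natCast_self]; ring
  have chain' := chain m
  rw [hm0, add_zero] at chain'
  obtain ⟨u, hu⟩ := chain'
  have hX : Kle (M⟦(-1:ℤ)⟧) 0 ((NpowF S d m).obj ((Ss (0 : ZMod n))⟦(-1:ℤ)⟧)) := by
    rw [NpowF_obj_eq]
    have h1 : TleZ M (S.nudInvIter d m ((Ss (0:ZMod n))⟦(-1:ℤ)⟧)) := hNb m hmN
    have h2 := tleZ_iff.1 h1
    exact kle_ground (kle_mono (by omega) h2)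
  have hY : Kge (M⟦(-1:ℤ)⟧) 1 ((Ss (0 : ZMod n))⟦(-1:ℤ)⟧) := inHeart_kge (hsimp' 0).1
  have hzero : u = 0 := E1 hfin S hsilt' hgen' hX hY u
  have hid : 𝟙 ((Ss (0 : ZMod n))⟦(-1:ℤ)⟧) = 0 := by
    refine hu _ (hsimp' 0).1 (𝟙 _) ?_
    rw [hzero, zero_comp]
  exact (hsimp' 0).2.1 ((IsZero.iff_id_eq_zero _).2 hid)

end St16

end Statement16Aux

/-- in the `ν_d`-finite case there is no cycle of simples with
`T(S_i, S_{i+1}[d]) ≠ 0`; in particular no simple `S` with `T(S,S[d]) ≠ 0`. -/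
theorem statement16 {k : Type u} [Field k]
    {C : Type u} [Category.{v} C] [Preadditive C] [CategoryTheory.Linear k C]
    [HasZeroObject C] [HasShift C ℤ] [∀ n : ℤ, (CategoryTheory.shiftFunctor C n).Additive]
    [Pretriangulated C] [HasFiniteBiproducts C]
    (hfin : HomFinite k C) (hKS : KrullSchmidt (C := C))
    (S : SerreFunctor k C) (d : ℤ) (M : C)
    (hM : IsDSilting S d M) (hAdj : HasRightAdjacentTStructure M)
    (hnufin : ∀ X : C, ∃ N : ℕ, ∀ n : ℕ, N ≤ n → TleZ M (S.nudInvIter d n X)) :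
    (¬ ∃ n : ℕ, 0 < n ∧ ∃ Ss : ZMod n → C,
        (∀ i, SimpleInHeart M (Ss i)) ∧
        ∀ i, ∃ f : Ss i ⟶ (Ss (i + 1))⟦d⟧, f ≠ 0) ∧
    (∀ S₀ : C, SimpleInHeart M S₀ → ∀ f : S₀ ⟶ S₀⟦d⟧, f = 0) := by
  have main : ¬ ∃ n : ℕ, 0 < n ∧ ∃ Ss : ZMod n → C,
      (∀ i, SimpleInHeart M (Ss i)) ∧
      ∀ i, ∃ f : Ss i ⟶ (Ss (i + 1))⟦d⟧, f ≠ 0 := by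
    rintro ⟨n, hn, Ss, hs, hc⟩
    exact St16.main_noncycle hfin S d M hM hAdj hnufin n hn Ss hs hc
  refine ⟨main, ?_⟩
  intro S₀ hS₀ f
  by_contra hf
  exact main ⟨1, one_pos, fun _ => S₀, fun _ => hS₀, fun _ => ⟨f, hf⟩⟩
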